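/- Let G be a finite group, σ an automorphism of G, M a σ-invariant normal subgroup of G, ψ : G → H a group homomorphism with kernel M, and g, h ∈ G. If t solves h = ρ_{(g,1)^t}(1_G) in G, then t solves ψ(h) = ρ̄_{(ψ(g),1)^t}(1_H) in Im(ψ) with the induced automorphism σ̄; in particular, if the SDLP for ψ(g), ψ(h) in Im(ψ) has no solution, neither has the SDLP for g, h in G. -/

import Mathlib

/-- Multiplication in the semidirect product `G ⋊_σ ℕ`:
`(g,s)(g',s') = (g·σ^s(g'), s+s')`. -/
def sdMulA {G : Type*} [Group G] (σ : MulAut G) (x y : G × ℕ) : G × ℕ :=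
  (x.1 * (σ ^ x.2) y.1, x.2 + y.2)

/-- The `t`-th power in the semidirect product `G ⋊_σ ℕ`. -/
def sdPowA {G : Type*} [Group G] (σ : MulAut G) (x : G × ℕ) : ℕ → G × ℕ
  | 0 => (1, 0)
  | t + 1 => sdMulA σ x (sdPowA σ x t)

/-- The transformation `ρ_{(g,s)} : G → G`, `x ↦ g·σ^s(x)`. -/
def rhoA {G : Type*} [Group G] (σ : MulAut G) (x : G × ℕ) : G → G :=
  fun z => x.1 * (σ ^ x.2) z

/-! A homomorphism `f` with `f ∘ σ = τ ∘ f` maps `σ`-semidirect powers and the maps `ρ` to their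
`τ`-counterparts. The corestriction of `ψ` to its image is such a map for `σ̄`, so it carries a
solution of the SDLP in `G` to a solution of the SDLP in `Im ψ`. -/

section Pushforward

variable {G K : Type*} [Group G] [Group K] {σ : MulAut G} {τ : MulAut K} {f : G →* K}

theorem map_mulAut_pow_apply (hf : ∀ x, f (σ x) = τ (f x)) (s : ℕ) (x : G) :
    f ((σ ^ s) x) = (τ ^ s) (f x) := by
  induction s generalizing x with
  | zero => rfl
  | succ s ih => rw [pow_succ, pow_succ, MulAut.mul_apply, MulAut.mul_apply, ih, hf]

theorem sdPowA_map (hf : ∀ x, f (σ x) = τ (f x)) (x : G × ℕ) (t : ℕ) :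
    sdPowA τ (Prod.map f id x) t = Prod.map f id (sdPowA σ x t) := by
  induction t with
  | zero => simp [sdPowA]
  | succ t ih => simp [sdPowA, sdMulA, ih, map_mulAut_pow_apply hf]

theorem rhoA_map (hf : ∀ x, f (σ x) = τ (f x)) (x : G × ℕ) (z : G) :
    rhoA τ (Prod.map f id x) (f z) = f (rhoA σ x z) := by
  simp only [rhoA, Prod.map_fst, Prod.map_snd, id, map_mul, map_mulAut_pow_apply hf]

theorem rhoA_sdPowA_map (hf : ∀ x, f (σ x) = τ (f x)) (g : G) (s t : ℕ) :
    rhoA τ (sdPowA τ (f g, s) t) 1 = f (rhoA σ (sdPowA σ (g, s) t) 1) := by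
  rw [← map_one f, ← rhoA_map hf, ← sdPowA_map hf]
  rfl

end Pushforward

theorem sdlp_pushforward_general {G H : Type*} [Group G] [Group H]
    (σ : MulAut G) (ψ : G →* H)
    (σbar : MulAut ↥ψ.range)
    (hcompat : ∀ x : G,
      (σbar ⟨ψ x, MonoidHom.mem_range.mpr ⟨x, rfl⟩⟩ : H) = ψ (σ x))
    (g h : G) :
    (∀ t : ℕ, h = rhoA σ (sdPowA σ (g, 1) t) 1 →
      (⟨ψ h, MonoidHom.mem_range.mpr ⟨h, rfl⟩⟩ : ψ.range)
        = rhoA σbar (sdPowA σbar (⟨ψ g, MonoidHom.mem_range.mpr ⟨g, rfl⟩⟩, 1) t) 1) ∧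
    ((¬ ∃ t : ℕ, (⟨ψ h, MonoidHom.mem_range.mpr ⟨h, rfl⟩⟩ : ψ.range)
        = rhoA σbar (sdPowA σbar (⟨ψ g, MonoidHom.mem_range.mpr ⟨g, rfl⟩⟩, 1) t) 1) →
      ¬ ∃ t : ℕ, h = rhoA σ (sdPowA σ (g, 1) t) 1) := by
  have hf : ∀ x, ψ.rangeRestrict (σ x) = σbar (ψ.rangeRestrict x) :=
    fun x => Subtype.ext (hcompat x).symm
  have solves_image : ∀ t : ℕ, h = rhoA σ (sdPowA σ (g, 1) t) 1 →
      (⟨ψ h, MonoidHom.mem_range.mpr ⟨h, rfl⟩⟩ : ψ.range)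
        = rhoA σbar (sdPowA σbar (⟨ψ g, MonoidHom.mem_range.mpr ⟨g, rfl⟩⟩, 1) t) 1 := by
    rintro t rfl
    exact (rhoA_sdPowA_map hf g 1 t).symm
  exact ⟨solves_image, fun hno ⟨t, ht⟩ => hno ⟨t, solves_image t ht⟩⟩

/-- if `t` solves the SDLP for `g, h` in `G`, then `t` solves the SDLP for
`ψ(g), ψ(h)` in `Im(ψ)` with the induced automorphism `σ̄`; in particular if the latter has
no solution, neither has the former. -/
theorem sdlp_pushforward {G H : Type*} [Group G] [Finite G] [Group H] [Finite H]
    (σ : MulAut G) (ψ : G →* H)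
    (hM : Subgroup.map σ.toMonoidHom ψ.ker = ψ.ker)
    (σbar : MulAut ↥ψ.range)
    (hcompat : ∀ x : G,
      (σbar ⟨ψ x, MonoidHom.mem_range.mpr ⟨x, rfl⟩⟩ : H) = ψ (σ x))
    (g h : G) :
    (∀ t : ℕ, h = rhoA σ (sdPowA σ (g, 1) t) 1 →
      (⟨ψ h, MonoidHom.mem_range.mpr ⟨h, rfl⟩⟩ : ψ.range)
        = rhoA σbar (sdPowA σbar (⟨ψ g, MonoidHom.mem_range.mpr ⟨g, rfl⟩⟩, 1) t) 1) ∧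
    ((¬ ∃ t : ℕ, (⟨ψ h, MonoidHom.mem_range.mpr ⟨h, rfl⟩⟩ : ψ.range)
        = rhoA σbar (sdPowA σbar (⟨ψ g, MonoidHom.mem_range.mpr ⟨g, rfl⟩⟩, 1) t) 1) →
      ¬ ∃ t : ℕ, h = rhoA σ (sdPowA σ (g, 1) t) 1) :=
  sdlp_pushforward_general σ ψ σbar hcompat g h
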